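/- arXiv:2201.08191 — 3 statements merged into one kernel-verified Lean document; each statement's English description precedes it below -/
import Mathlib

section
/- Let M, K be skew-symmetric n×n real matrices, S₁, S₂ : ℝⁿ → ℝ smooth with symmetric Hessians, Δt > 0, ΔW ∈ ℝ a real number, and coefficients d_k ∈ ℝ, k = 1,…,m. Suppose vectors Z⁰, Z¹, and ₖZ⁰, ₖZ¹ ∈ ℝⁿ (k=1,…,m) satisfy the linearized (variational) scheme M (dZ¹ − dZ⁰)/Δt + Σ_k d_k K d(ₖZ^{1/2}) = ∇²S₁(Z^{1/2}) dZ^{1/2} + (ΔW/Δt) ∇²S₂(Z^{1/2}) dZ^{1/2}, where Z^{1/2} = (Z⁰+Z¹)/2 and d(ₖZ^{1/2}) = (d(ₖZ⁰) + d(ₖZ¹))/2, and suppose additionally dZ^{1/2} appears as the center among the ₖZ^{1/2}. Then (ω¹ − ω⁰)/Δt + Σ_k d_k κ_k^{1/2} = 0, where ωⁿ = ½ dZⁿ ∧ M dZⁿ and κ_k^{1/2} = dZ^{1/2} ∧ K d(ₖZ^{1/2}). -/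
open Matrix BigOperators

/-- Discrete multi-symplectic conservation law of the LRBF collocation midpoint
method (Theorem 3.1): if the differentials satisfy the linearized midpoint
scheme, then `(ω¹ − ω⁰)/Δt + ∑ k, d k • κ_k^{1/2} = 0`, where
`ωⁿ = ½ dZⁿ ∧ M dZⁿ` and `κ_k^{1/2} = dZ^{1/2} ∧ K d(ₖZ^{1/2})`. -/
theorem lrbf_midpoint_discrete_multisymplectic {n m : ℕ} {V W : Type*}
    [AddCommGroup V] [Module ℝ V] [AddCommGroup W] [Module ℝ W]
    (ω : V →ₗ[ℝ] V →ₗ[ℝ] W) (halt : ∀ a : V, ω a a = 0)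
    (M K H1 H2 : Matrix (Fin n) (Fin n) ℝ)
    (hM : Mᵀ = -M) (hK : Kᵀ = -K) (hH1 : H1ᵀ = H1) (hH2 : H2ᵀ = H2)
    (Δt ΔW : ℝ) (hΔt : Δt ≠ 0)
    (d : Fin m → ℝ)
    (dZ0 dZ1 : Fin n → V) (dkZ0 dkZ1 : Fin m → Fin n → V)
    (dZmid : Fin n → V)
    (hmid : dZmid = fun i => (2:ℝ)⁻¹ • (dZ0 i + dZ1 i))
    (dkZmid : Fin m → Fin n → V)
    (hkmid : ∀ k, dkZmid k = fun i => (2:ℝ)⁻¹ • (dkZ0 k i + dkZ1 k i))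
    (hcenter : ∃ c : Fin m, dkZ0 c = dZ0 ∧ dkZ1 c = dZ1)
    (hscheme : ∀ i : Fin n,
      Δt⁻¹ • (∑ j, M i j • (dZ1 j - dZ0 j))
        + ∑ k, d k • ∑ j, K i j • dkZmid k j
      = ∑ j, H1 i j • dZmid j + (ΔW / Δt) • ∑ j, H2 i j • dZmid j) :
    Δt⁻¹ • ((2:ℝ)⁻¹ • (∑ i, ∑ j, M i j • ω (dZ1 i) (dZ1 j))
            - (2:ℝ)⁻¹ • (∑ i, ∑ j, M i j • ω (dZ0 i) (dZ0 j)))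
      + ∑ k, d k • ∑ i, ∑ j, K i j • ω (dZmid i) (dkZmid k j) = 0 := by
  have skew : ∀ a b : V, ω a b = - ω b a := by
    intro a b
    have h := halt (a + b)
    simp only [map_add, LinearMap.add_apply, halt, zero_add, add_zero] at h
    exact eq_neg_of_add_eq_zero_right h
  have cross : ∀ (A : Matrix (Fin n) (Fin n) ℝ), Aᵀ = -A → ∀ a b : Fin n → V,
      (∑ i, ∑ j, A i j • ω (a i) (b j)) = ∑ i, ∑ j, A i j • ω (b i) (a j) := by
    intro A hA a b
    rw [Finset.sum_comm]
    refine Finset.sum_congr rfl fun i _ => Finset.sum_congr rfl fun j _ => ?_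
    have hA' : A j i = -A i j := by
      have := congrFun (congrFun hA i) j
      simpa using this
    rw [hA', skew (a j) (b i), neg_smul, smul_neg, neg_neg]
  have hsymzero : ∀ (H : Matrix (Fin n) (Fin n) ℝ), Hᵀ = H → ∀ c : Fin n → V,
      (∑ i, ∑ j, H i j • ω (c i) (c j)) = 0 := by
    intro H hH c
    set S := ∑ i, ∑ j, H i j • ω (c i) (c j) with hS
    have h1 : S = -S := by
      calc S = ∑ j, ∑ i, H i j • ω (c i) (c j) := Finset.sum_comm
        _ = ∑ j, ∑ i, -(H j i • ω (c j) (c i)) := by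
            refine Finset.sum_congr rfl fun j _ => Finset.sum_congr rfl fun i _ => ?_
            have hH' : H i j = H j i := by
              have := congrFun (congrFun hH j) i
              simpa using this
            rw [hH', skew (c i) (c j), smul_neg]
        _ = -S := by simp [hS]
    have h2 : (2:ℝ) • S = 0 := by
      rw [two_smul]
      nth_rewrite 1 [h1]
      exact neg_add_cancel S
    calc S = (2:ℝ)⁻¹ • ((2:ℝ) • S) := by rw [smul_smul]; norm_num
      _ = 0 := by rw [h2, smul_zero]
  -- sum the scheme against dZmid
  have keysum : Δt⁻¹ • (∑ i, ∑ j, M i j • (ω (dZmid i) (dZ1 j) - ω (dZmid i) (dZ0 j)))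
      + ∑ k, d k • ∑ i, ∑ j, K i j • ω (dZmid i) (dkZmid k j) = 0 := by
    have h : (∑ i, ω (dZmid i) (Δt⁻¹ • (∑ j, M i j • (dZ1 j - dZ0 j))
          + ∑ k, d k • ∑ j, K i j • dkZmid k j))
        = ∑ i, ω (dZmid i) (∑ j, H1 i j • dZmid j + (ΔW / Δt) • ∑ j, H2 i j • dZmid j) :=
      Finset.sum_congr rfl fun i _ => by rw [hscheme i]
    have hL : (∑ i, ω (dZmid i) (Δt⁻¹ • (∑ j, M i j • (dZ1 j - dZ0 j))
          + ∑ k, d k • ∑ j, K i j • dkZmid k j))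
        = Δt⁻¹ • (∑ i, ∑ j, M i j • (ω (dZmid i) (dZ1 j) - ω (dZmid i) (dZ0 j)))
          + ∑ k, d k • ∑ i, ∑ j, K i j • ω (dZmid i) (dkZmid k j) := by
      calc (∑ i, ω (dZmid i) (Δt⁻¹ • (∑ j, M i j • (dZ1 j - dZ0 j))
              + ∑ k, d k • ∑ j, K i j • dkZmid k j))
          = ∑ i, (Δt⁻¹ • (∑ j, M i j • (ω (dZmid i) (dZ1 j) - ω (dZmid i) (dZ0 j)))
              + ∑ k, d k • ∑ j, K i j • ω (dZmid i) (dkZmid k j)) := by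
            refine Finset.sum_congr rfl fun i _ => ?_
            simp only [map_add, _root_.map_smul, map_sum, map_sub]
        _ = (∑ i, Δt⁻¹ • (∑ j, M i j • (ω (dZmid i) (dZ1 j) - ω (dZmid i) (dZ0 j))))
              + ∑ i, ∑ k, d k • ∑ j, K i j • ω (dZmid i) (dkZmid k j) :=
            Finset.sum_add_distrib
        _ = Δt⁻¹ • (∑ i, ∑ j, M i j • (ω (dZmid i) (dZ1 j) - ω (dZmid i) (dZ0 j)))
              + ∑ k, ∑ i, d k • ∑ j, K i j • ω (dZmid i) (dkZmid k j) := by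
            rw [Finset.smul_sum, Finset.sum_comm]
        _ = Δt⁻¹ • (∑ i, ∑ j, M i j • (ω (dZmid i) (dZ1 j) - ω (dZmid i) (dZ0 j)))
              + ∑ k, d k • ∑ i, ∑ j, K i j • ω (dZmid i) (dkZmid k j) := by
            refine congrArg _ (Finset.sum_congr rfl fun k _ => ?_)
            rw [Finset.smul_sum]
    have hR : (∑ i, ω (dZmid i) (∑ j, H1 i j • dZmid j + (ΔW / Δt) • ∑ j, H2 i j • dZmid j))
        = 0 := by
      calc (∑ i, ω (dZmid i) (∑ j, H1 i j • dZmid j + (ΔW / Δt) • ∑ j, H2 i j • dZmid j))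
          = ∑ i, ((∑ j, H1 i j • ω (dZmid i) (dZmid j))
              + (ΔW / Δt) • ∑ j, H2 i j • ω (dZmid i) (dZmid j)) := by
            refine Finset.sum_congr rfl fun i _ => ?_
            simp only [map_add, _root_.map_smul, map_sum]
        _ = (∑ i, ∑ j, H1 i j • ω (dZmid i) (dZmid j))
              + (ΔW / Δt) • ∑ i, ∑ j, H2 i j • ω (dZmid i) (dZmid j) := by
            rw [Finset.sum_add_distrib, Finset.smul_sum]
        _ = 0 := by
            rw [hsymzero H1 hH1 dZmid, hsymzero H2 hH2 dZmid, smul_zero, add_zero]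
    rw [hL, hR] at h
    exact h
  have hT : (∑ i, ∑ j, M i j • (ω (dZmid i) (dZ1 j) - ω (dZmid i) (dZ0 j)))
      = (2:ℝ)⁻¹ • (∑ i, ∑ j, M i j • ω (dZ1 i) (dZ1 j))
        - (2:ℝ)⁻¹ • (∑ i, ∑ j, M i j • ω (dZ0 i) (dZ0 j)) := by
    have hC := cross M hM dZ0 dZ1
    calc (∑ i, ∑ j, M i j • (ω (dZmid i) (dZ1 j) - ω (dZmid i) (dZ0 j)))
        = ∑ i, ∑ j, ((2:ℝ)⁻¹ • (M i j • ω (dZ0 i) (dZ1 j))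
            + (2:ℝ)⁻¹ • (M i j • ω (dZ1 i) (dZ1 j))
            - ((2:ℝ)⁻¹ • (M i j • ω (dZ0 i) (dZ0 j))
            + (2:ℝ)⁻¹ • (M i j • ω (dZ1 i) (dZ0 j)))) := by
          refine Finset.sum_congr rfl fun i _ => Finset.sum_congr rfl fun j _ => ?_
          rw [hmid]
          simp only [_root_.map_smul, map_add, LinearMap.add_apply, LinearMap.smul_apply]
          module
      _ = (2:ℝ)⁻¹ • (∑ i, ∑ j, M i j • ω (dZ0 i) (dZ1 j))
            + (2:ℝ)⁻¹ • (∑ i, ∑ j, M i j • ω (dZ1 i) (dZ1 j))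
            - ((2:ℝ)⁻¹ • (∑ i, ∑ j, M i j • ω (dZ0 i) (dZ0 j))
            + (2:ℝ)⁻¹ • (∑ i, ∑ j, M i j • ω (dZ1 i) (dZ0 j))) := by
          simp only [Finset.sum_sub_distrib, Finset.sum_add_distrib, Finset.smul_sum]
      _ = (2:ℝ)⁻¹ • (∑ i, ∑ j, M i j • ω (dZ1 i) (dZ1 j))
            - (2:ℝ)⁻¹ • (∑ i, ∑ j, M i j • ω (dZ0 i) (dZ0 j)) := by
          rw [hC]
          abel
  rw [← hT]
  exact keysum
end

section
/- Let (ã^{(1)}, b̃^{(1)}), (ã^{(2)}, b̃^{(2)}) be r-stage tableaux and (ā, b̄) an r-stage tableau satisfying: (i) ā_{nm} b̃^{(1)}_m + ã^{(1)}_{mn} b̄_n − b̃^{(1)}_m b̄_n = 0, and (ii) ã^{(2)}_{nm} b̃^{(1)}_m + ã^{(1)}_{mn} b̃^{(2)}_n − b̃^{(1)}_m b̃^{(2)}_n = 0 for all m, n. Given differentials satisfying duᵢ⁰ = dUᵢᵐ − Δt Σ_n ã^{(1)}_{nm} dVᵢⁿ, dvᵢ⁰ = dVᵢᵐ − Δt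 Σ_n ã^{(2)}_{nm} dΦᵢⁿ − ΔWᵢ Σ_n ā_{nm} dGᵢⁿ, duᵢ¹ = duᵢ⁰ + Δt Σ_m b̃^{(1)}_m dVᵢᵐ, dvᵢ¹ = dvᵢ⁰ + Δt Σ_m b̃^{(2)}_m dΦᵢᵐ + ΔWᵢ Σ_m b̄_m dGᵢᵐ, and such that dUᵢᵐ ∧ dGᵢᵐ = 0 and dUᵢᵐ ∧ dFᵢᵐ = 0 for the symmetric-Jacobian parts (where dΦᵢᵐ = d(δ_x𝒲ᵢᵐ) − dFᵢᵐ), then (duᵢ¹ ∧ dvᵢ¹ − duᵢ⁰ ∧ dvᵢ⁰)/Δt = Σ_m b̃^{(2)}_m dUᵢᵐ ∧ d(δ_x𝒲ᵢᵐ). -/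
open BigOperators

/-- Equation (5.14) in the proof of Theorem 5.1: under the partitioned
symplectic conditions, the temporal partitioned Runge–Kutta expansion of
`du ∧ dv` telescopes to the stage flux sum:
`(du¹ ∧ dv¹ − du⁰ ∧ dv⁰)/Δt = ∑ m, b̃² m • (dU m ∧ d(δₓ𝒲 m))`. -/
theorem prk_temporal_wedge_identity {r : ℕ} {V W : Type*}
    [AddCommGroup V] [Module ℝ V] [AddCommGroup W] [Module ℝ W]
    (ω : V →ₗ[ℝ] V →ₗ[ℝ] W) (halt : ∀ a : V, ω a a = 0)
    (at1 at2 abar : Fin r → Fin r → ℝ) (bt1 bt2 bbar : Fin r → ℝ)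
    (hcond1 : ∀ m n, abar n m * bt1 m + at1 m n * bbar n - bt1 m * bbar n = 0)
    (hcond2 : ∀ m n, at2 n m * bt1 m + at1 m n * bt2 n - bt1 m * bt2 n = 0)
    (Δt ΔW : ℝ) (hΔt : Δt ≠ 0)
    (du0 dv0 du1 dv1 : V)
    (dU dV dΦ dDW dF dG : Fin r → V)
    (hΦ : ∀ m, dΦ m = dDW m - dF m)
    (hu0 : ∀ m, du0 = dU m - Δt • ∑ n, at1 n m • dV n)
    (hv0 : ∀ m, dv0 = dV m - Δt • ∑ n, at2 n m • dΦ n - ΔW • ∑ n, abar n m • dG n)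
    (hu1 : du1 = du0 + Δt • ∑ m, bt1 m • dV m)
    (hv1 : dv1 = dv0 + Δt • ∑ m, bt2 m • dΦ m + ΔW • ∑ m, bbar m • dG m)
    (hG : ∀ m, ω (dU m) (dG m) = 0)
    (hF : ∀ m, ω (dU m) (dF m) = 0) :
    Δt⁻¹ • (ω du1 dv1 - ω du0 dv0) = ∑ m, bt2 m • ω (dU m) (dDW m) := by
  have h1 : ∀ m, ω du0 (dΦ m) = ω (dU m) (dDW m) - Δt • ∑ n, at1 n m • ω (dV n) (dΦ m) := by
    intro m
    have hU : ω (dU m) (dΦ m) = ω (dU m) (dDW m) := by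
      rw [hΦ m]; simp [hF m]
    rw [hu0 m]
    simp only [map_sub, map_smul, map_sum, LinearMap.sub_apply, LinearMap.smul_apply,
      LinearMap.coe_sum, Finset.sum_apply, hU]
  have h2 : ∀ m, ω du0 (dG m) = - (Δt • ∑ n, at1 n m • ω (dV n) (dG m)) := by
    intro m
    rw [hu0 m]
    simp only [map_sub, map_smul, map_sum, LinearMap.sub_apply, LinearMap.smul_apply,
      LinearMap.coe_sum, Finset.sum_apply, hG m, zero_sub]
  have h3 : ∀ m, ω (dV m) dv0 = - (Δt • ∑ n, at2 n m • ω (dV m) (dΦ n))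
      - ΔW • ∑ n, abar n m • ω (dV m) (dG n) := by
    intro m
    rw [hv0 m]
    simp only [map_sub, map_smul, map_sum, halt, zero_sub]
  have key : ω du1 dv1 - ω du0 dv0 =
      Δt • (∑ m, bt2 m • ω (dU m) (dDW m))
      + ∑ m, ∑ n, ((Δt*Δt) * (bt1 m * bt2 n - at1 m n * bt2 n - at2 n m * bt1 m)) • ω (dV m) (dΦ n)
      + ∑ m, ∑ n, ((Δt*ΔW) * (bt1 m * bbar n - at1 m n * bbar n - abar n m * bt1 m)) • ω (dV m) (dG n) := by
    rw [hu1, hv1]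
    simp only [map_add, map_smul, map_sum, LinearMap.add_apply, LinearMap.smul_apply,
      LinearMap.coe_sum, Finset.sum_apply]
    simp only [h1, h2, h3]
    simp only [smul_sub, smul_add, smul_neg, Finset.smul_sum, smul_smul, mul_sub, sub_smul,
      Finset.sum_sub_distrib, Finset.sum_add_distrib, Finset.sum_neg_distrib]
    have e1 : ∑ x : Fin r, ∑ y : Fin r, (Δt*(bt1 x*(Δt*at2 y x))) • (ω (dV x)) (dΦ y)
        = ∑ x : Fin r, ∑ y : Fin r, (Δt*Δt*(at2 y x * bt1 x)) • (ω (dV x)) (dΦ y) :=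
      Finset.sum_congr rfl fun x _ => Finset.sum_congr rfl fun y _ => by
        rw [show Δt*(bt1 x*(Δt*at2 y x)) = Δt*Δt*(at2 y x * bt1 x) by ring]
    have e2 : ∑ x : Fin r, ∑ y : Fin r, (Δt*(bt1 x*(ΔW*abar y x))) • (ω (dV x)) (dG y)
        = ∑ x : Fin r, ∑ y : Fin r, (Δt*ΔW*(abar y x * bt1 x)) • (ω (dV x)) (dG y) :=
      Finset.sum_congr rfl fun x _ => Finset.sum_congr rfl fun y _ => by
        rw [show Δt*(bt1 x*(ΔW*abar y x)) = Δt*ΔW*(abar y x * bt1 x) by ring]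
    have e4 : ∑ x : Fin r, ∑ y : Fin r, (Δt*(bt2 x*(Δt*at1 y x))) • (ω (dV y)) (dΦ x)
        = ∑ x : Fin r, ∑ y : Fin r, (Δt*Δt*(at1 x y * bt2 y)) • (ω (dV x)) (dΦ y) := by
      rw [Finset.sum_comm]
      exact Finset.sum_congr rfl fun x _ => Finset.sum_congr rfl fun y _ => by
        rw [show Δt*(bt2 y*(Δt*at1 x y)) = Δt*Δt*(at1 x y * bt2 y) by ring]
    have e5 : ∑ x : Fin r, ∑ y : Fin r, (Δt*(bt2 x*(Δt*bt1 y))) • (ω (dV y)) (dΦ x)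
        = ∑ x : Fin r, ∑ y : Fin r, (Δt*Δt*(bt1 x * bt2 y)) • (ω (dV x)) (dΦ y) := by
      rw [Finset.sum_comm]
      exact Finset.sum_congr rfl fun x _ => Finset.sum_congr rfl fun y _ => by
        rw [show Δt*(bt2 y*(Δt*bt1 x)) = Δt*Δt*(bt1 x * bt2 y) by ring]
    have e6 : ∑ x : Fin r, ∑ y : Fin r, (ΔW*(bbar x*(Δt*at1 y x))) • (ω (dV y)) (dG x)
        = ∑ x : Fin r, ∑ y : Fin r, (Δt*ΔW*(at1 x y * bbar y)) • (ω (dV x)) (dG y) := by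
      rw [Finset.sum_comm]
      exact Finset.sum_congr rfl fun x _ => Finset.sum_congr rfl fun y _ => by
        rw [show ΔW*(bbar y*(Δt*at1 x y)) = Δt*ΔW*(at1 x y * bbar y) by ring]
    have e7 : ∑ x : Fin r, ∑ y : Fin r, (ΔW*(bbar x*(Δt*bt1 y))) • (ω (dV y)) (dG x)
        = ∑ x : Fin r, ∑ y : Fin r, (Δt*ΔW*(bt1 x * bbar y)) • (ω (dV x)) (dG y) := by
      rw [Finset.sum_comm]
      exact Finset.sum_congr rfl fun x _ => Finset.sum_congr rfl fun y _ => by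
        rw [show ΔW*(bbar y*(Δt*bt1 x)) = Δt*ΔW*(bt1 x * bbar y) by ring]
    rw [e1, e2, e4, e5, e6, e7]
    abel
  have z1 : ∀ m n : Fin r, (Δt * Δt * (bt1 m * bt2 n - at1 m n * bt2 n - at2 n m * bt1 m)) = 0 := by
    intro m n; linear_combination (-(Δt * Δt)) * hcond2 m n
  have z2 : ∀ m n : Fin r, (Δt * ΔW * (bt1 m * bbar n - at1 m n * bbar n - abar n m * bt1 m)) = 0 := by
    intro m n; linear_combination (-(Δt * ΔW)) * hcond1 m n
  rw [key]
  simp only [z1, z2, zero_smul, Finset.sum_const_zero, add_zero]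
  rw [smul_smul, inv_mul_cancel₀ hΔt, one_smul]
end

section
/- Let (a^{(1)}, b^{(1)}), (a^{(2)}, b^{(2)}) be s-stage tableaux satisfying a^{(2)}_{ij} b^{(1)}_i + a^{(1)}_{ji} b^{(2)}_j − b^{(1)}_i b^{(2)}_j = 0 for all i, j. Suppose dUᵢᵐ = du₀ᵐ + Δx Σ_j a^{(1)}_{ij} d𝒲ⱼᵐ, d𝒲ᵢᵐ = dw₀ᵐ + Δx Σ_j a^{(2)}_{ij} d(δ_x𝒲ⱼᵐ), du₁ᵐ = du₀ᵐ + Δx Σ_i b^{(1)}_i d𝒲ᵢᵐ, dw₁ᵐ = dw₀ᵐ + Δx Σ_i b^{(2)}_i d(δ_x𝒲ᵢᵐ). Then (du₁ᵐ ∧ dw₁ᵐ − du₀ᵐ ∧ dw₀ᵐ)/Δx = Σ_i b^{(2)}_i dUᵢᵐ ∧ d(δ_x𝒲ᵢᵐ). -/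
open BigOperators

/-- Equation (5.15) in the proof of Theorem 5.1: under the partitioned
symplectic condition, the spatial partitioned Runge–Kutta expansion of
`du ∧ dw` telescopes to the stage flux sum:
`(du₁ ∧ dw₁ − du₀ ∧ dw₀)/Δx = ∑ i, b² i • (dU i ∧ d(δₓ𝒲 i))`. -/
theorem prk_spatial_wedge_identity {s : ℕ} {V W : Type*}
    [AddCommGroup V] [Module ℝ V] [AddCommGroup W] [Module ℝ W]
    (ω : V →ₗ[ℝ] V →ₗ[ℝ] W) (halt : ∀ a : V, ω a a = 0)
    (a1 a2 : Fin s → Fin s → ℝ) (b1 b2 : Fin s → ℝ)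
    (hcond : ∀ i j, a2 i j * b1 i + a1 j i * b2 j - b1 i * b2 j = 0)
    (Δx : ℝ) (hΔx : Δx ≠ 0)
    (du0 dw0 du1 dw1 : V)
    (dU dWc dδ : Fin s → V)
    (hU : ∀ i, dU i = du0 + Δx • ∑ j, a1 i j • dWc j)
    (hWc : ∀ i, dWc i = dw0 + Δx • ∑ j, a2 i j • dδ j)
    (hu1 : du1 = du0 + Δx • ∑ i, b1 i • dWc i)
    (hw1 : dw1 = dw0 + Δx • ∑ i, b2 i • dδ i) :
    Δx⁻¹ • (ω du1 dw1 - ω du0 dw0) = ∑ i, b2 i • ω (dU i) (dδ i) := by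
  rw [inv_smul_eq_iff₀ hΔx]
  -- Key: since `ω (dWc i) (dWc i) = 0`, the pairing of a stage with `dw0`
  -- is the (negated) pairing with the flux corrections.
  have key : ∀ i, ω (dWc i) dw0 = ∑ j, (-(Δx * a2 i j)) • ω (dWc i) (dδ j) := by
    intro i
    have h0 : dw0 = dWc i + (-Δx) • ∑ j, a2 i j • dδ j := by rw [hWc i]; module
    rw [h0]
    simp [map_add, map_smul, map_sum, Finset.smul_sum, smul_smul, halt]
  calc ω du1 dw1 - ω du0 dw0
      = (∑ j, (Δx * b2 j) • ω du0 (dδ j))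
        + ∑ i, ∑ j, ((Δx * Δx) * (b1 i * b2 j - b1 i * a2 i j)) • ω (dWc i) (dδ j) := by
        rw [hu1, hw1]
        simp only [map_add, map_smul, map_sum, LinearMap.add_apply, LinearMap.smul_apply,
          LinearMap.sum_apply, key, smul_add, Finset.smul_sum, smul_smul, mul_neg, neg_mul,
          neg_smul, smul_neg, Finset.sum_add_distrib]
        rw [show (∑ x : Fin s, ∑ y : Fin s, (Δx * b2 x * (Δx * b1 y)) • (ω (dWc y)) (dδ x))
            = ∑ y : Fin s, ∑ x : Fin s, (Δx * b2 x * (Δx * b1 y)) • (ω (dWc y)) (dδ x) by exact Finset.sum_comm]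
        have hmerge :
            (∑ i : Fin s, ∑ j : Fin s, -((Δx * b1 i * (Δx * a2 i j)) • (ω (dWc i)) (dδ j)))
              + ∑ i : Fin s, ∑ j : Fin s, (Δx * b2 j * (Δx * b1 i)) • (ω (dWc i)) (dδ j)
            = ∑ i, ∑ j, ((Δx * Δx) * (b1 i * b2 j - b1 i * a2 i j)) • ω (dWc i) (dδ j) := by
          rw [← Finset.sum_add_distrib]
          refine Finset.sum_congr rfl fun i _ => ?_
          rw [← Finset.sum_add_distrib]
          refine Finset.sum_congr rfl fun j _ => ?_
          match_scalars
          ring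
        rw [← hmerge]
        abel
    _ = Δx • ∑ i, b2 i • ω (dU i) (dδ i) := by
        simp only [hU, map_add, map_smul, map_sum, LinearMap.add_apply, LinearMap.smul_apply,
          LinearMap.sum_apply, Finset.smul_sum, smul_smul, smul_add, Finset.sum_add_distrib]
        congr 1
        rw [Finset.sum_comm]
        refine Finset.sum_congr rfl fun i _ => Finset.sum_congr rfl fun j _ => ?_
        have h := hcond i j
        match_scalars
        linear_combination (-(Δx * Δx)) * hcond j i
end
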